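/- Let K_{2n} = [[0, I_n], [I_n, 0]] and let X = [[A, B], [Bᵀ, D]] be a real symmetric 2n×2n matrix with Xᵀ K_{2n} X = K_{2n}, equivalently BA and DB are antisymmetric and B² = I - AD. If A and D are positive definite then X is positive definite; in particular the Schur complement D - Bᵀ A⁻¹ B equals A⁻¹. -/

import Mathlib

open Matrix

/-! Unpacking `Xᵀ K X = K` blockwise gives `B A + A Bᵀ = 0` and `B² + A D = 1`. The first says
`Bᵀ = -A⁻¹ B A`, so `Bᵀ A⁻¹ B = -A⁻¹ B² = D - A⁻¹`: the Schur complement of `A` in `X` is `A⁻¹`,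
which is positive definite. A Hermitian block matrix whose corner `A` is positive definite is
positive definite iff its Schur complement is: semidefiniteness is completion of squares, and
`det X = det A * det (D - Bᴴ A⁻¹ B)` settles invertibility. -/

namespace Matrix

variable {m n 𝕜 R : Type*} [Fintype m] [Fintype n] [DecidableEq m] [DecidableEq n]

open scoped ComplexOrder in
theorem PosDef.posDef_fromBlocks₁₁_iff [RCLike 𝕜] {A : Matrix m m 𝕜} (B : Matrix m n 𝕜)
    (D : Matrix n n 𝕜) (hA : A.PosDef) :
    (fromBlocks A B Bᴴ D).PosDef ↔ (D - Bᴴ * A⁻¹ * B).PosDef := by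
  let _ := hA.isUnit.invertible
  have hdet : (fromBlocks A B Bᴴ D).det = A.det * (D - Bᴴ * A⁻¹ * B).det := by
    rw [det_fromBlocks₁₁, invOf_eq_nonsing_inv]
  constructor
  · intro hX
    have hS := (hA.fromBlocks₁₁ B D).1 hX.posSemidef
    rw [hS.posDef_iff_det_ne_zero]
    exact right_ne_zero_of_mul (hdet ▸ hX.det_pos.ne')
  · intro hS
    rw [((hA.fromBlocks₁₁ B D).2 hS.posSemidef).posDef_iff_det_ne_zero, hdet]
    exact mul_ne_zero hA.det_pos.ne' hS.det_pos.ne'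

theorem transpose_mul_fromBlocks_zero_one_mul [CommRing R] {A D : Matrix n n R}
    (hA : A.IsSymm) (hD : D.IsSymm) (B : Matrix n n R) :
    (fromBlocks A B Bᵀ D)ᵀ * fromBlocks 0 1 1 0 * fromBlocks A B Bᵀ D =
      fromBlocks (B * A + A * Bᵀ) (B * B + A * D) (D * A + Bᵀ * Bᵀ) (D * B + Bᵀ * D) := by
  rw [fromBlocks_transpose, hA.eq, hD.eq, transpose_transpose, fromBlocks_multiply,
    fromBlocks_multiply]
  simp only [Matrix.mul_zero, Matrix.mul_one, zero_add, add_zero]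

theorem sub_mul_inv_mul_eq_inv [CommRing R] {A B C D : Matrix n n R} [Invertible A]
    (hC : B * A + A * C = 0) (hB : B * B + A * D = 1) :
    D - C * A⁻¹ * B = A⁻¹ := by
  have hC' : C = -(A⁻¹ * B * A) := by
    rw [← inv_mul_cancel_left_of_invertible A C, eq_neg_of_add_eq_zero_right hC,
      Matrix.mul_neg, Matrix.mul_assoc]
  have hBB : B * B = 1 - A * D := eq_sub_of_add_eq hB
  calc D - C * A⁻¹ * B = D + A⁻¹ * (B * B) := by
        simp only [hC', Matrix.neg_mul, sub_neg_eq_add, Matrix.mul_assoc,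
          mul_inv_cancel_left_of_invertible]
    _ = A⁻¹ := by
        rw [hBB, Matrix.mul_sub, Matrix.mul_one, inv_mul_cancel_left_of_invertible]
        abel

end Matrix

theorem stmt_13_general {n : ℕ} (A B D : Matrix (Fin n) (Fin n) ℝ)
    (hA : A.IsSymm) (hD : D.IsSymm)
    (hX : (fromBlocks A B Bᵀ D)ᵀ * fromBlocks 0 1 1 0 * fromBlocks A B Bᵀ D =
      fromBlocks 0 1 1 0)
    (hApd : A.PosDef) :
    (fromBlocks A B Bᵀ D).PosDef ∧ D - Bᵀ * A⁻¹ * B = A⁻¹ := by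
  let _ := hApd.isUnit.invertible
  rw [transpose_mul_fromBlocks_zero_one_mul hA hD, fromBlocks_inj] at hX
  have hSchur : D - Bᵀ * A⁻¹ * B = A⁻¹ := sub_mul_inv_mul_eq_inv hX.1 hX.2.1
  refine ⟨?_, hSchur⟩
  rw [← conjTranspose_eq_transpose_of_trivial, hApd.posDef_fromBlocks₁₁_iff,
    conjTranspose_eq_transpose_of_trivial, hSchur]
  exact hApd.inv

theorem stmt_13 {n : ℕ} (A B D : Matrix (Fin n) (Fin n) ℝ)
    (hA : A.IsSymm) (hD : D.IsSymm)
    (hX : (fromBlocks A B Bᵀ D)ᵀ * fromBlocks 0 1 1 0 * fromBlocks A B Bᵀ D =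
      fromBlocks 0 1 1 0)
    (hApd : A.PosDef) (hDpd : D.PosDef) :
    (fromBlocks A B Bᵀ D).PosDef ∧ D - Bᵀ * A⁻¹ * B = A⁻¹ :=
  stmt_13_general A B D hA hD hX hApd
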